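/- Let f(x) = x² − x − 3 and, for n ≥ 2, let Aₙ(x,y) = ∏_{θ ∈ f^{−(n−2)}(0)} Ψ_θ(x,y). Then for every n ≥ 2 and all (x,y) ∈ ℝ² with L(x,y)·K(x,y) ≠ 0, one has (L(x,y)·K(x,y))^{2^{n−2}} · Aₙ(F(x,y)) = A₁(x,y)^{2^{n−2}} · A_{n+1}(x,y). -/
import Mathlib


/-- The quadratic polynomial `f(x) = x² - x - 3`. -/
noncomputable def hanoiF (x : ℝ) : ℝ := x ^ 2 - x - 3

/-- `Ψ_θ(x,y) = x² - 1 - xy - 2y² - θy`. -/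
noncomputable def hanoiPsiTheta (θ x y : ℝ) : ℝ := x ^ 2 - 1 - x * y - 2 * y ^ 2 - θ * y

/-- The two-dimensional rational map `F(x,y) = (x', y')`. -/
noncomputable def hanoiMap (p : ℝ × ℝ) : ℝ × ℝ :=
  (p.1 + 2 * p.2 ^ 2 * (-p.1 ^ 2 + p.1 + p.2 ^ 2) /
      ((p.1 - 1 - p.2) * (p.1 ^ 2 - 1 + p.2 - p.2 ^ 2)),
   p.2 ^ 2 * (p.1 - 1 + p.2) /
      ((p.1 - 1 - p.2) * (p.1 ^ 2 - 1 + p.2 - p.2 ^ 2)))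

/-- `L(x,y) = x - 1 - y`. -/
noncomputable def hanoiL (x y : ℝ) : ℝ := x - 1 - y

/-- `K(x,y) = x² - 1 + y - y²`. -/
noncomputable def hanoiK (x y : ℝ) : ℝ := x ^ 2 - 1 + y - y ^ 2

/-- `A₁(x,y) = x - 1 + y` and, for `n ≥ 2`,
`Aₙ(x,y) = ∏_{θ ∈ f^{-(n-2)}(0)} Ψ_θ(x,y)` (a finite product, since `f^{-(n-2)}(0)` is a
finite set of real numbers). -/
noncomputable def hanoiA : ℕ → ℝ → ℝ → ℝ
  | 0, _, _ => 1
  | 1, x, y => x - 1 + y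
  | (n + 2), x, y => ∏ᶠ θ ∈ {t : ℝ | hanoiF^[n] t = 0}, hanoiPsiTheta θ x y

/-- Larger root of `f(s) = θ`. -/
noncomputable def hanoiR1 (θ : ℝ) : ℝ := (1 + Real.sqrt (13 + 4 * θ)) / 2

/-- Smaller root of `f(s) = θ`. -/
noncomputable def hanoiR2 (θ : ℝ) : ℝ := (1 - Real.sqrt (13 + 4 * θ)) / 2

/-- Explicit finset describing `f^{-m}(0)`. -/
noncomputable def hanoiT : ℕ → Finset ℝ
  | 0 => {0}
  | m + 1 => (hanoiT m).biUnion (fun θ => {hanoiR1 θ, hanoiR2 θ})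

lemma hanoi_fiber (θ : ℝ) (hθ : -2 ≤ θ) (s : ℝ) :
    hanoiF s = θ ↔ s = hanoiR1 θ ∨ s = hanoiR2 θ := by
  have hd : Real.sqrt (13 + 4 * θ) ^ 2 = 13 + 4 * θ :=
    Real.sq_sqrt (by linarith)
  have key : (s - hanoiR1 θ) * (s - hanoiR2 θ) = hanoiF s - θ := by
    unfold hanoiR1 hanoiR2 hanoiF
    linear_combination (-(1:ℝ)/4) * hd
  constructor
  · intro h
    have h0 : (s - hanoiR1 θ) * (s - hanoiR2 θ) = 0 := by rw [key, h, sub_self]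
    rcases mul_eq_zero.mp h0 with h1 | h1
    · exact Or.inl (by linarith [sub_eq_zero.mp h1])
    · exact Or.inr (by linarith [sub_eq_zero.mp h1])
  · intro h
    have h0 : (s - hanoiR1 θ) * (s - hanoiR2 θ) = 0 := by
      rcases h with h | h <;> rw [h] <;> ring
    have := key
    rw [h0] at this
    linarith

lemma hanoiR1_mem (θ : ℝ) (hθ : θ ∈ Set.Icc (-2:ℝ) 3) :
    hanoiR1 θ ∈ Set.Icc (-2:ℝ) 3 := by
  obtain ⟨h1, h2⟩ := hθ
  have hnn : (0:ℝ) ≤ Real.sqrt (13 + 4 * θ) := Real.sqrt_nonneg _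
  have h5 : Real.sqrt (13 + 4 * θ) ≤ 5 := by
    have : Real.sqrt (13 + 4 * θ) ≤ Real.sqrt 25 :=
      Real.sqrt_le_sqrt (by linarith)
    have h25 : Real.sqrt 25 = 5 := by
      rw [show (25:ℝ) = 5 ^ 2 by norm_num, Real.sqrt_sq (by norm_num)]
    linarith
  constructor <;> unfold hanoiR1 <;> [linarith; linarith]

lemma hanoiR2_mem (θ : ℝ) (hθ : θ ∈ Set.Icc (-2:ℝ) 3) :
    hanoiR2 θ ∈ Set.Icc (-2:ℝ) 3 := by
  obtain ⟨h1, h2⟩ := hθ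
  have hnn : (0:ℝ) ≤ Real.sqrt (13 + 4 * θ) := Real.sqrt_nonneg _
  have h5 : Real.sqrt (13 + 4 * θ) ≤ 5 := by
    have : Real.sqrt (13 + 4 * θ) ≤ Real.sqrt 25 :=
      Real.sqrt_le_sqrt (by linarith)
    have h25 : Real.sqrt 25 = 5 := by
      rw [show (25:ℝ) = 5 ^ 2 by norm_num, Real.sqrt_sq (by norm_num)]
    linarith
  constructor <;> unfold hanoiR2 <;> [linarith; linarith]

lemma hanoiR_ne (θ : ℝ) (hθ : -2 ≤ θ) : hanoiR1 θ ≠ hanoiR2 θ := by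
  have hpos : 0 < Real.sqrt (13 + 4 * θ) := Real.sqrt_pos.mpr (by linarith)
  unfold hanoiR1 hanoiR2
  intro h
  nlinarith

lemma hanoiT_props (m : ℕ) :
    (↑(hanoiT m) : Set ℝ) = {t : ℝ | hanoiF^[m] t = 0} ∧
    (∀ θ ∈ hanoiT m, θ ∈ Set.Icc (-2:ℝ) 3) ∧
    (hanoiT m).card = 2 ^ m := by
  induction m with
  | zero =>
    refine ⟨?_, ?_, ?_⟩
    · ext t; simp [hanoiT]
    · intro θ hθ
      simp only [hanoiT, Finset.mem_singleton] at hθ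
      subst hθ; constructor <;> norm_num
    · simp [hanoiT]
  | succ m ih =>
    obtain ⟨hset, hicc, hcard⟩ := ih
    have hdisj : ∀ θ₁ ∈ hanoiT m, ∀ θ₂ ∈ hanoiT m, θ₁ ≠ θ₂ →
        Disjoint ({hanoiR1 θ₁, hanoiR2 θ₁} : Finset ℝ) {hanoiR1 θ₂, hanoiR2 θ₂} := by
      intro θ₁ h₁ θ₂ h₂ hne
      rw [Finset.disjoint_left]
      intro s hs₁ hs₂
      simp only [Finset.mem_insert, Finset.mem_singleton] at hs₁ hs₂
      have hf₁ : hanoiF s = θ₁ := (hanoi_fiber θ₁ (hicc θ₁ h₁).1 s).mpr hs₁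
      have hf₂ : hanoiF s = θ₂ := (hanoi_fiber θ₂ (hicc θ₂ h₂).1 s).mpr hs₂
      exact hne (hf₁ ▸ hf₂)
    refine ⟨?_, ?_, ?_⟩
    · ext s
      simp only [hanoiT, Finset.coe_biUnion, Set.mem_iUnion, Finset.mem_coe,
        Finset.mem_insert, Finset.mem_singleton, Set.mem_setOf_eq,
        Function.iterate_succ_apply]
      constructor
      · rintro ⟨θ, hθ, hs⟩
        have hf : hanoiF s = θ := (hanoi_fiber θ (hicc θ hθ).1 s).mpr hs
        have : hanoiF s ∈ (↑(hanoiT m) : Set ℝ) := by rw [hf]; exact hθ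
        rw [hset] at this
        exact this
      · intro h
        have : hanoiF s ∈ (↑(hanoiT m) : Set ℝ) := by rw [hset]; exact h
        refine ⟨hanoiF s, this, ?_⟩
        exact (hanoi_fiber (hanoiF s) (hicc _ this).1 s).mp rfl
    · intro θ hθ
      simp only [hanoiT, Finset.mem_biUnion, Finset.mem_insert,
        Finset.mem_singleton] at hθ
      obtain ⟨θ', hθ', h⟩ := hθ
      rcases h with h | h <;> subst h
      · exact hanoiR1_mem θ' (hicc θ' hθ')
      · exact hanoiR2_mem θ' (hicc θ' hθ')
    · rw [show hanoiT (m + 1) = (hanoiT m).biUnion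
          (fun θ => {hanoiR1 θ, hanoiR2 θ}) from rfl,
        Finset.card_biUnion hdisj]
      have : ∀ θ ∈ hanoiT m, ({hanoiR1 θ, hanoiR2 θ} : Finset ℝ).card = 2 := by
        intro θ hθ
        rw [Finset.card_insert_of_notMem (by
          simp only [Finset.mem_singleton]
          exact hanoiR_ne θ (hicc θ hθ).1), Finset.card_singleton]
      rw [Finset.sum_congr rfl this, Finset.sum_const, hcard, smul_eq_mul]
      ring

/-- The key pull-back identity for a single `Ψ_θ`. -/
lemma hanoi_pull (θ x y : ℝ) (hL : hanoiL x y ≠ 0) (hK : hanoiK x y ≠ 0) :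
    hanoiL x y * hanoiK x y *
      hanoiPsiTheta θ (hanoiMap (x, y)).1 (hanoiMap (x, y)).2 =
    hanoiA 1 x y *
      ((x ^ 2 - 1 - x * y - 2 * y ^ 2) ^ 2 - (x ^ 2 - 1 - x * y - 2 * y ^ 2) * y -
        (3 + θ) * y ^ 2) := by
  unfold hanoiL at hL
  unfold hanoiK at hK
  simp only [hanoiL, hanoiK]
  simp only [hanoiMap, hanoiPsiTheta, hanoiA]
  field_simp
  ring

/-- Product of `Ψ` over a fiber. -/
lemma hanoi_fibprod (θ x y : ℝ) (hθ : -2 ≤ θ) :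
    hanoiPsiTheta (hanoiR1 θ) x y * hanoiPsiTheta (hanoiR2 θ) x y =
    (x ^ 2 - 1 - x * y - 2 * y ^ 2) ^ 2 - (x ^ 2 - 1 - x * y - 2 * y ^ 2) * y -
      (3 + θ) * y ^ 2 := by
  have hd : Real.sqrt (13 + 4 * θ) ^ 2 = 13 + 4 * θ :=
    Real.sq_sqrt (by linarith)
  have hsum : hanoiR1 θ + hanoiR2 θ = 1 := by unfold hanoiR1 hanoiR2; ring
  have hprod : hanoiR1 θ * hanoiR2 θ = -3 - θ := by
    unfold hanoiR1 hanoiR2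
    linear_combination (-(1:ℝ)/4) * hd
  unfold hanoiPsiTheta
  linear_combination (-(x ^ 2 - 1 - x * y - 2 * y ^ 2) * y) * hsum + y ^ 2 * hprod

/-- For `n ≥ 2`: `(L·K)^{2^{n-2}} · Aₙ(F(x,y)) = A₁^{2^{n-2}} · A_{n+1}(x,y)`
wherever `L·K ≠ 0`. -/
theorem A_pullback (n : ℕ) (hn : 2 ≤ n) (x y : ℝ)
    (hLK : hanoiL x y * hanoiK x y ≠ 0) :
    (hanoiL x y * hanoiK x y) ^ 2 ^ (n - 2) *
        hanoiA n (hanoiMap (x, y)).1 (hanoiMap (x, y)).2 =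
      hanoiA 1 x y ^ 2 ^ (n - 2) * hanoiA (n + 1) x y := by
  obtain ⟨hL, hK⟩ := mul_ne_zero_iff.mp hLK
  obtain ⟨m, rfl⟩ : ∃ m, n = m + 2 := ⟨n - 2, by omega⟩
  obtain ⟨hset, hicc, hcard⟩ := hanoiT_props m
  obtain ⟨hset', hicc', hcard'⟩ := hanoiT_props (m + 1)
  have hm2 : m + 2 - 2 = m := by omega
  rw [hm2]
  have hA : hanoiA (m + 2) (hanoiMap (x, y)).1 (hanoiMap (x, y)).2 =
      ∏ θ ∈ hanoiT m, hanoiPsiTheta θ (hanoiMap (x, y)).1 (hanoiMap (x, y)).2 := by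
    show (∏ᶠ θ ∈ {t : ℝ | hanoiF^[m] t = 0},
      hanoiPsiTheta θ (hanoiMap (x, y)).1 (hanoiMap (x, y)).2) = _
    rw [← hset, finprod_mem_coe_finset]
  have hA' : hanoiA (m + 2 + 1) x y =
      ∏ s ∈ hanoiT (m + 1), hanoiPsiTheta s x y := by
    show (∏ᶠ θ ∈ {t : ℝ | hanoiF^[m + 1] t = 0}, hanoiPsiTheta θ x y) = _
    rw [← hset', finprod_mem_coe_finset]
  rw [hA, hA']
  -- rewrite RHS product over fibers
  have hdisj : ∀ θ₁ ∈ hanoiT m, ∀ θ₂ ∈ hanoiT m, θ₁ ≠ θ₂ →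
      Disjoint ({hanoiR1 θ₁, hanoiR2 θ₁} : Finset ℝ) {hanoiR1 θ₂, hanoiR2 θ₂} := by
    intro θ₁ h₁ θ₂ h₂ hne
    rw [Finset.disjoint_left]
    intro s hs₁ hs₂
    simp only [Finset.mem_insert, Finset.mem_singleton] at hs₁ hs₂
    have hf₁ : hanoiF s = θ₁ := (hanoi_fiber θ₁ (hicc θ₁ h₁).1 s).mpr hs₁
    have hf₂ : hanoiF s = θ₂ := (hanoi_fiber θ₂ (hicc θ₂ h₂).1 s).mpr hs₂
    exact hne (hf₁ ▸ hf₂)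
  have hRHS : (∏ s ∈ hanoiT (m + 1), hanoiPsiTheta s x y) =
      ∏ θ ∈ hanoiT m, ((x ^ 2 - 1 - x * y - 2 * y ^ 2) ^ 2 -
        (x ^ 2 - 1 - x * y - 2 * y ^ 2) * y - (3 + θ) * y ^ 2) := by
    rw [show hanoiT (m + 1) = (hanoiT m).biUnion
        (fun θ => {hanoiR1 θ, hanoiR2 θ}) from rfl,
      Finset.prod_biUnion hdisj]
    refine Finset.prod_congr rfl fun θ hθ => ?_
    rw [Finset.prod_pair (hanoiR_ne θ (hicc θ hθ).1)]
    exact hanoi_fibprod θ x y (hicc θ hθ).1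
  rw [hRHS]
  calc (hanoiL x y * hanoiK x y) ^ 2 ^ m *
        ∏ θ ∈ hanoiT m, hanoiPsiTheta θ (hanoiMap (x, y)).1 (hanoiMap (x, y)).2
      = ∏ θ ∈ hanoiT m, (hanoiL x y * hanoiK x y *
          hanoiPsiTheta θ (hanoiMap (x, y)).1 (hanoiMap (x, y)).2) := by
        rw [Finset.prod_mul_distrib, Finset.prod_const, hcard]
    _ = ∏ θ ∈ hanoiT m, (hanoiA 1 x y *
          ((x ^ 2 - 1 - x * y - 2 * y ^ 2) ^ 2 -
            (x ^ 2 - 1 - x * y - 2 * y ^ 2) * y - (3 + θ) * y ^ 2)) :=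
        Finset.prod_congr rfl fun θ _ => hanoi_pull θ x y hL hK
    _ = hanoiA 1 x y ^ 2 ^ m *
          ∏ θ ∈ hanoiT m, ((x ^ 2 - 1 - x * y - 2 * y ^ 2) ^ 2 -
            (x ^ 2 - 1 - x * y - 2 * y ^ 2) * y - (3 + θ) * y ^ 2) := by
        rw [Finset.prod_mul_distrib, Finset.prod_const, hcard]
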